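/- arXiv:1509.08992 — 2 statements merged into one kernel-verified Lean document; each statement's English description precedes it below -/
import Mathlib

section
/- For the exponential family p_θ(x) = exp(θ·t(x) - A(θ)) on a finite set X with ‖t(x)‖₂ ≤ R for all x, the total variation distance satisfies ‖p_θ - p_φ‖_TV ≤ 2R·‖θ - φ‖₂ for all θ, φ ∈ ℝ^n. -/
open scoped RealInnerProductSpace

/-!
The log-density `⟪θ, t x⟫ - A θ` is `2R`-Lipschitz in `θ` uniformly in `x`: the linear part by
Cauchy–Schwarz, and the log-partition function `A` because shifting every exponent by at most `c`
shifts a log-sum-exp by at most `c`. Two probability vectors whose logarithms differ by at most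
`c` everywhere are at `ℓ¹` distance at most `2c`, since `|e^u - e^v| ≤ (e^u + e^v) |u - v|`.
-/

namespace Real

theorem exp_sub_exp_le_exp_mul_sub (u v : ℝ) : exp u - exp v ≤ exp u * (u - v) := by
  have hexp : exp v = exp u * exp (v - u) := by rw [← exp_add]; ring_nf
  nlinarith [add_one_le_exp (v - u), exp_pos u]

theorem abs_exp_sub_exp_le (u v : ℝ) : |exp u - exp v| ≤ (exp u + exp v) * |u - v| := by
  rcases le_total v u with h | h
  · rw [abs_of_nonneg (sub_nonneg.2 (exp_le_exp.2 h)), abs_of_nonneg (sub_nonneg.2 h)]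
    nlinarith [exp_sub_exp_le_exp_mul_sub u v, exp_pos v]
  · rw [abs_of_nonpos (sub_nonpos.2 (exp_le_exp.2 h)), abs_of_nonpos (sub_nonpos.2 h)]
    nlinarith [exp_sub_exp_le_exp_mul_sub v u, exp_pos u]

section LogSumExp

variable {ι : Type*} {s : Finset ι}

theorem log_sum_exp_le_log_sum_exp_add (hs : s.Nonempty) {f g : ι → ℝ} {c : ℝ}
    (h : ∀ i ∈ s, f i ≤ g i + c) :
    log (∑ i ∈ s, exp (f i)) ≤ log (∑ i ∈ s, exp (g i)) + c := by
  have hpos : 0 < ∑ i ∈ s, exp (g i) := Finset.sum_pos (fun i _ => exp_pos _) hs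
  have hsum : ∑ i ∈ s, exp (f i) ≤ (∑ i ∈ s, exp (g i)) * exp c := by
    rw [Finset.sum_mul]
    exact Finset.sum_le_sum fun i hi => by rw [← exp_add]; exact exp_le_exp.2 (h i hi)
  calc log (∑ i ∈ s, exp (f i))
      ≤ log ((∑ i ∈ s, exp (g i)) * exp c) :=
        log_le_log (Finset.sum_pos (fun i _ => exp_pos _) hs) hsum
    _ = log (∑ i ∈ s, exp (g i)) + c := by rw [log_mul hpos.ne' (exp_pos c).ne', log_exp]

theorem abs_log_sum_exp_sub_log_sum_exp_le (hs : s.Nonempty) {f g : ι → ℝ} {c : ℝ}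
    (h : ∀ i ∈ s, |f i - g i| ≤ c) :
    |log (∑ i ∈ s, exp (f i)) - log (∑ i ∈ s, exp (g i))| ≤ c := by
  have hfg := log_sum_exp_le_log_sum_exp_add hs (f := f) (g := g) (c := c)
    fun i hi => by linarith [(abs_le.1 (h i hi)).2]
  have hgf := log_sum_exp_le_log_sum_exp_add hs (f := g) (g := f) (c := c)
    fun i hi => by linarith [(abs_le.1 (h i hi)).1]
  exact abs_le.2 ⟨by linarith, by linarith⟩

theorem sum_exp_sub_log_sum_exp (hs : s.Nonempty) (f : ι → ℝ) :
    ∑ i ∈ s, exp (f i - log (∑ j ∈ s, exp (f j))) = 1 := by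
  have hpos : 0 < ∑ j ∈ s, exp (f j) := Finset.sum_pos (fun i _ => exp_pos _) hs
  simp only [exp_sub, exp_log hpos, ← Finset.sum_div, div_self hpos.ne']

theorem sum_abs_exp_sub_exp_le {a b : ι → ℝ} {c : ℝ} (ha : ∑ i ∈ s, exp (a i) = 1)
    (hb : ∑ i ∈ s, exp (b i) = 1) (h : ∀ i ∈ s, |a i - b i| ≤ c) :
    ∑ i ∈ s, |exp (a i) - exp (b i)| ≤ 2 * c := by
  calc ∑ i ∈ s, |exp (a i) - exp (b i)|
      ≤ ∑ i ∈ s, (exp (a i) + exp (b i)) * c :=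
        Finset.sum_le_sum fun i hi => (abs_exp_sub_exp_le _ _).trans
          (mul_le_mul_of_nonneg_left (h i hi) (by positivity))
    _ = 2 * c := by rw [← Finset.sum_mul, Finset.sum_add_distrib, ha, hb]; ring

end LogSumExp

end Real

theorem stmt_4 {X : Type*} [Fintype X] [Nonempty X] {n : ℕ}
    (t : X → EuclideanSpace ℝ (Fin n)) (R : ℝ) (hR : ∀ x, ‖t x‖ ≤ R)
    (A : EuclideanSpace ℝ (Fin n) → ℝ)
    (hA : ∀ θ, A θ = Real.log (∑ x, Real.exp ⟪θ, t x⟫))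
    (p : EuclideanSpace ℝ (Fin n) → X → ℝ)
    (hp : ∀ θ x, p θ x = Real.exp (⟪θ, t x⟫ - A θ))
    (θ φ : EuclideanSpace ℝ (Fin n)) :
    (1 / 2) * ∑ x, |p θ x - p φ x| ≤ 2 * R * ‖θ - φ‖ := by
  have hinner : ∀ x, |⟪θ, t x⟫ - ⟪φ, t x⟫| ≤ R * ‖θ - φ‖ := fun x => by
    rw [← inner_sub_left, mul_comm]
    exact (abs_real_inner_le_norm _ _).trans (mul_le_mul_of_nonneg_left (hR x) (norm_nonneg _))
  have hA_lip : |A θ - A φ| ≤ R * ‖θ - φ‖ := by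
    rw [hA, hA]
    exact Real.abs_log_sum_exp_sub_log_sum_exp_le Finset.univ_nonempty fun x _ => hinner x
  have hlog : ∀ x ∈ Finset.univ,
      |(⟪θ, t x⟫ - A θ) - (⟪φ, t x⟫ - A φ)| ≤ 2 * R * ‖θ - φ‖ := fun x _ => by
    rw [sub_sub_sub_comm]
    linarith [abs_sub (⟪θ, t x⟫ - ⟪φ, t x⟫) (A θ - A φ), hinner x]
  have hnorm : ∀ ψ, ∑ x, Real.exp (⟪ψ, t x⟫ - A ψ) = 1 := fun ψ => by
    rw [hA]; exact Real.sum_exp_sub_log_sum_exp Finset.univ_nonempty _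
  have hTV := Real.sum_abs_exp_sub_exp_le (hnorm θ) (hnorm φ) hlog
  simp only [hp]
  linarith
end

section
/- For the exponential family p_θ(x) = exp(θ·t(x) - A(θ)) on a finite set X with ‖t(x)‖₂ ≤ R, define f(θ) = A(θ) - θ·t̄ + (λ/2)‖θ‖₂² for a fixed vector t̄ ∈ ℝ^n and λ ≥ 0. Then the gradient of f is Lipschitz continuous with constant 4R² + λ, i.e., ‖∇f(θ) - ∇f(φ)‖₂ ≤ (4R² + λ)‖θ - φ‖₂ for all θ, φ. -/
/-!
Writing `θ = φ + (θ - φ)`, the mean `∑ₓ softmax(k + s • b) x • t x` with `k x = ⟪φ, t x⟫` and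
`b x = ⟪θ - φ, t x⟫` moves from the mean at `φ` (`s = 0`) to the mean at `θ` (`s = 1`). Its
derivative in `s` is the covariance-type sum `∑ₓ pₓ (b x - E b) • t x`, of norm at most
`2 ‖θ - φ‖ R · R`, so the mean value inequality makes the mean map `2R²`-Lipschitz. The
regularisation `λ θ` adds `λ` to the constant.
-/

open scoped RealInnerProductSpace
open Finset Real

noncomputable def softmax {X : Type*} [Fintype X] (k : X → ℝ) (x : X) : ℝ :=
  exp (k x) / ∑ y, exp (k y)

section Softmax

variable {X : Type*} [Fintype X] [Nonempty X]

lemma sum_exp_pos (k : X → ℝ) : 0 < ∑ y, exp (k y) :=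
  sum_pos (fun _ _ => exp_pos _) univ_nonempty

lemma softmax_pos (k : X → ℝ) (x : X) : 0 < softmax k x :=
  div_pos (exp_pos _) (sum_exp_pos k)

lemma sum_softmax (k : X → ℝ) : ∑ x, softmax k x = 1 := by
  simp only [softmax]
  rw [← sum_div, div_self (sum_exp_pos k).ne']

lemma abs_sum_softmax_mul_le (k b : X → ℝ) {B : ℝ} (hb : ∀ x, |b x| ≤ B) :
    |∑ x, softmax k x * b x| ≤ B :=
  calc |∑ x, softmax k x * b x| ≤ ∑ x, softmax k x * |b x| := by
        refine (abs_sum_le_sum_abs _ _).trans_eq (sum_congr rfl fun x _ => ?_)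
        rw [abs_mul, abs_of_pos (softmax_pos k x)]
    _ ≤ ∑ x, softmax k x * B := by
        gcongr with x
        exacts [(softmax_pos k x).le, hb x]
    _ = B := by rw [← sum_mul, sum_softmax, one_mul]

lemma hasDerivAt_softmax_add_smul (k b : X → ℝ) (x : X) (s : ℝ) :
    HasDerivAt (fun s => softmax (k + s • b) x)
      (softmax (k + s • b) x * (b x - ∑ y, softmax (k + s • b) y * b y)) s := by
  have hexp (y : X) : HasDerivAt (fun s => exp (k y + s * b y)) (exp (k y + s * b y) * b y) s := by
    simpa using (((hasDerivAt_id s).mul_const (b y)).const_add (k y)).exp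
  have hZ := sum_exp_pos (k + s • b)
  simp only [Pi.add_apply, Pi.smul_apply, smul_eq_mul] at hZ
  refine ((hexp x).div (HasDerivAt.fun_sum fun y _ => hexp y) hZ.ne').congr_deriv ?_
  simp only [softmax, Pi.add_apply, Pi.smul_apply, smul_eq_mul, div_mul_eq_mul_div, ← sum_div]
  field_simp

variable {E : Type*} [NormedAddCommGroup E] [NormedSpace ℝ E]

lemma norm_sum_softmax_mul_sub_smul_le (k b : X → ℝ) (c : X → E) {B C : ℝ}
    (hb : ∀ x, |b x| ≤ B) (hc : ∀ x, ‖c x‖ ≤ C) :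
    ‖∑ x, (softmax k x * (b x - ∑ y, softmax k y * b y)) • c x‖ ≤ 2 * B * C := by
  have hB : 0 ≤ B := (abs_nonneg _).trans (hb (Classical.arbitrary X))
  have hβ := abs_sum_softmax_mul_le k b hb
  calc ‖∑ x, (softmax k x * (b x - ∑ y, softmax k y * b y)) • c x‖
      ≤ ∑ x, softmax k x * (|b x - ∑ y, softmax k y * b y| * ‖c x‖) := by
        refine (norm_sum_le _ _).trans_eq (sum_congr rfl fun x _ => ?_)
        rw [norm_smul, norm_mul, norm_of_nonneg (softmax_pos k x).le, norm_eq_abs, mul_assoc]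
    _ ≤ ∑ x, softmax k x * (2 * B * C) := by
        gcongr with x
        · exact (softmax_pos k x).le
        · linarith [abs_sub (b x) (∑ y, softmax k y * b y), hb x]
        · exact hc x
    _ = 2 * B * C := by rw [← sum_mul, sum_softmax, one_mul]

lemma norm_sum_softmax_add_smul_sub_le (k b : X → ℝ) (c : X → E) {B C : ℝ}
    (hb : ∀ x, |b x| ≤ B) (hc : ∀ x, ‖c x‖ ≤ C) :
    ‖∑ x, softmax (k + b) x • c x - ∑ x, softmax k x • c x‖ ≤ 2 * B * C := by
  have hderiv (s : ℝ) := HasDerivAt.fun_sum fun x (_ : x ∈ univ) =>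
    (hasDerivAt_softmax_add_smul k b x s).smul_const (c x)
  simpa using norm_image_sub_le_of_norm_deriv_le_segment_01'
    (fun s _ => (hderiv s).hasDerivWithinAt)
    (fun s _ => norm_sum_softmax_mul_sub_smul_le (k + s • b) b c hb hc)

end Softmax

lemma norm_sum_softmax_inner_smul_sub_le {X E : Type*} [Fintype X] [Nonempty X]
    [NormedAddCommGroup E] [InnerProductSpace ℝ E] (t : X → E) {R : ℝ} (hR : ∀ x, ‖t x‖ ≤ R)
    (θ φ : E) :
    ‖∑ x, softmax (fun x => ⟪θ, t x⟫) x • t x - ∑ x, softmax (fun x => ⟪φ, t x⟫) x • t x‖ ≤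
      2 * R ^ 2 * ‖θ - φ‖ := by
  have hθ : (fun x => ⟪θ, t x⟫) = (fun x => ⟪φ, t x⟫) + fun x => ⟪θ - φ, t x⟫ := by
    ext x
    simp only [Pi.add_apply, inner_sub_left, add_sub_cancel]
  have hb (x : X) : |⟪θ - φ, t x⟫| ≤ ‖θ - φ‖ * R :=
    (abs_real_inner_le_norm _ _).trans (mul_le_mul_of_nonneg_left (hR x) (norm_nonneg _))
  calc _ ≤ 2 * (‖θ - φ‖ * R) * R := hθ ▸ norm_sum_softmax_add_smul_sub_le _ _ t hb hR
    _ = 2 * R ^ 2 * ‖θ - φ‖ := by ring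

theorem stmt_5 {X : Type*} [Fintype X] [Nonempty X] {n : ℕ}
    (t : X → EuclideanSpace ℝ (Fin n)) (R : ℝ) (hR : ∀ x, ‖t x‖ ≤ R)
    (A : EuclideanSpace ℝ (Fin n) → ℝ)
    (hA : ∀ θ, A θ = Real.log (∑ x, Real.exp ⟪θ, t x⟫))
    (p : EuclideanSpace ℝ (Fin n) → X → ℝ)
    (hp : ∀ θ x, p θ x = Real.exp (⟪θ, t x⟫ - A θ))
    (tbar : EuclideanSpace ℝ (Fin n)) (lam : ℝ) (hlam : 0 ≤ lam)
    (g : EuclideanSpace ℝ (Fin n) → EuclideanSpace ℝ (Fin n))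
    (hg : ∀ θ, g θ = (∑ x, p θ x • t x) - tbar + lam • θ)
    (θ φ : EuclideanSpace ℝ (Fin n)) :
    ‖g θ - g φ‖ ≤ (4 * R ^ 2 + lam) * ‖θ - φ‖ := by
  have hp_softmax (ψ : EuclideanSpace ℝ (Fin n)) : p ψ = softmax fun x => ⟪ψ, t x⟫ := by
    ext x
    rw [hp, hA, exp_sub, exp_log (sum_exp_pos _), softmax]
  have hsplit : g θ - g φ = (∑ x, p θ x • t x - ∑ x, p φ x • t x) + lam • (θ - φ) := by
    rw [hg, hg, smul_sub]
    abel
  calc ‖g θ - g φ‖ ≤ ‖∑ x, p θ x • t x - ∑ x, p φ x • t x‖ + ‖lam • (θ - φ)‖ :=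
        hsplit ▸ norm_add_le _ _
    _ ≤ 2 * R ^ 2 * ‖θ - φ‖ + lam * ‖θ - φ‖ := by
        rw [hp_softmax, hp_softmax, norm_smul, norm_of_nonneg hlam]
        gcongr
        exact norm_sum_softmax_inner_smul_sub_le t hR θ φ
    _ ≤ (4 * R ^ 2 + lam) * ‖θ - φ‖ := by
        rw [← add_mul]
        gcongr
        nlinarith [sq_nonneg R]
end
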